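/- arXiv:2301.13613 — 5 statements merged into one kernel-verified Lean document; each statement's English description precedes it below -/
import Mathlib

section
/- Let ℓ ⊂ ℝ² be the line through a point p with unit direction vector d = (cos β, sin β), let ξ ∈ ℝ² with ξ ∉ ℓ, let z* be the orthogonal projection of ξ onto ℓ, and let ξ' := 2z* − ξ be the mirror image of ξ across ℓ. Identify ℝ² with ℂ. For any x ∈ ℝ² and any y ∈ ℓ with y ≠ ξ' such that y lies on the segment from ξ' to x, the polar angles satisfy arg(y − ξ) + arg(x − ξ') ≡ 2β (mod 2π), i.e. as elements of ℝ/2πℤ, the angle of y − ξ equals 2β minus the angle of x − ξ'. -/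
open Real Complex ComplexConjugate

/-! With `d` a unit vector, reflection across the line `p + ℝ d` is `z ↦ zs + d² · conj (z - zs)`
for any point `zs` of the line. Hence for `y` on the line, `y - ξ' = d² · conj (y - ξ)`, so
`arg (y - ξ') = 2β - arg (y - ξ)`; and `x - ξ'` is a positive multiple of `y - ξ'`. -/

namespace Complex

theorem mul_conj_eq_one_of_norm_eq_one {d : ℂ} (hd : ‖d‖ = 1) : d * conj d = 1 := by
  rw [mul_conj', hd]; norm_num

theorem sq_mul_conj_eq_neg_of_inner_eq_zero {v d : ℂ} (hd : ‖d‖ = 1) (h : inner ℝ v d = 0) :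
    d ^ 2 * conj v = -v := by
  have hdd := mul_conj_eq_one_of_norm_eq_one hd
  -- `⟪v, d⟫_ℝ = re (d * conj v)`, and a complex number with zero real part is minus its conjugate
  have hre : d * conj v + conj d * v = 0 := by
    rw [Complex.inner] at h
    simpa [h] using add_conj (d * conj v)
  linear_combination d * hre - v * hdd

theorem sq_mul_conj_ofReal_mul {d : ℂ} (hd : ‖d‖ = 1) (t : ℝ) :
    d ^ 2 * conj (t * d) = t * d := by
  have hdd := mul_conj_eq_one_of_norm_eq_one hd
  rw [map_mul, conj_ofReal]
  linear_combination t * d * hdd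

theorem sub_mirror_eq_sq_mul_conj_sub {p d zs ξ y : ℂ} (hd : ‖d‖ = 1)
    (hzs : ∃ s : ℝ, zs = p + s * d) (hy : ∃ t : ℝ, y = p + t * d)
    (hproj : inner ℝ (ξ - zs) d = 0) :
    y - (2 * zs - ξ) = d ^ 2 * conj (y - ξ) := by
  obtain ⟨s, rfl⟩ := hzs
  obtain ⟨t, rfl⟩ := hy
  have hline : p + t * d - (p + s * d) = ((t - s : ℝ) : ℂ) * d := by push_cast; ring
  have hsplit : p + t * d - ξ = (p + t * d - (p + s * d)) - (ξ - (p + s * d)) := by ring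
  rw [hsplit, map_sub, mul_sub, sq_mul_conj_eq_neg_of_inner_eq_zero hd hproj, hline,
    sq_mul_conj_ofReal_mul hd]
  push_cast
  ring

theorem arg_mul_conj_coe_angle {a w : ℂ} (ha : a ≠ 0) (hw : w ≠ 0) :
    (arg (a * conj w) : Real.Angle) = arg a - arg w := by
  rw [arg_mul_coe_angle ha ((map_ne_zero _).mpr hw), arg_conj_coe_angle, sub_eq_add_neg]

theorem arg_sub_eq_of_mem_segment {a x y : ℂ} (hy : y ∈ segment ℝ a x) (hya : y ≠ a) :
    arg (x - a) = arg (y - a) := by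
  rw [segment_eq_image'] at hy
  obtain ⟨v, ⟨hv0, -⟩, rfl⟩ := hy
  have hv : 0 < v := hv0.lt_of_ne (by rintro rfl; simp at hya)
  rw [add_sub_cancel_left, real_smul, arg_real_mul _ hv]

theorem arg_cos_add_sin_mul_I_coe_angle_ofReal (β : ℝ) :
    (arg (Real.cos β + Real.sin β * I) : Real.Angle) = β := by
  simpa only [Real.Angle.cos_coe, Real.Angle.sin_coe] using arg_cos_add_sin_mul_I_coe_angle β

end Complex

theorem reflection_angle_identity_general (β : ℝ) (p d : ℂ)
    (hd : d = Real.cos β + Real.sin β * Complex.I)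
    (ℓ : Set ℂ) (hℓ : ℓ = {z : ℂ | ∃ t : ℝ, z = p + (t : ℂ) * d})
    (ξ : ℂ)
    (zs : ℂ) (hzs : zs ∈ ℓ) (hproj : (inner ℝ (ξ - zs) d : ℝ) = 0)
    (ξ' : ℂ) (hξ' : ξ' = 2 * zs - ξ)
    (x y : ℂ) (hy : y ∈ ℓ) (hyne : y ≠ ξ') (hseg : y ∈ segment ℝ ξ' x) :
    ((Complex.arg (y - ξ) : Real.Angle) + (Complex.arg (x - ξ') : Real.Angle)) =
      ((2 * β : ℝ) : Real.Angle) := by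
  subst hℓ
  have hd1 : ‖d‖ = 1 := by rw [hd, ofReal_cos, ofReal_sin, norm_cos_add_sin_mul_I]
  have hd0 : d ≠ 0 := norm_ne_zero_iff.mp (by rw [hd1]; exact one_ne_zero)
  have hmirror : y - ξ' = d ^ 2 * conj (y - ξ) :=
    hξ' ▸ sub_mirror_eq_sq_mul_conj_sub hd1 hzs hy hproj
  have hyξ : y - ξ ≠ 0 := by
    intro h
    rw [h, map_zero, mul_zero, sub_eq_zero] at hmirror
    exact hyne hmirror
  rw [arg_sub_eq_of_mem_segment hseg hyne, hmirror, arg_mul_conj_coe_angle (pow_ne_zero 2 hd0) hyξ,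
    arg_pow_coe_angle, hd, arg_cos_add_sin_mul_I_coe_angle_ofReal, two_mul, Real.Angle.coe_add]
  abel

/-- Reflection law for angles: identify `ℝ²` with `ℂ`, let `ℓ` be the line through `p`
with unit direction `d = cos β + i sin β`, let `ξ ∉ ℓ`, let `z*` be the orthogonal
projection of `ξ` onto `ℓ` and `ξ' = 2z* − ξ` its mirror image. If `y ∈ ℓ`, `y ≠ ξ'`,
lies on the segment from `ξ'` to an observation point `x`, then
`arg(y − ξ) + arg(x − ξ') ≡ 2β (mod 2π)`. -/
theorem reflection_angle_identity (β : ℝ) (p d : ℂ)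
    (hd : d = Real.cos β + Real.sin β * Complex.I)
    (ℓ : Set ℂ) (hℓ : ℓ = {z : ℂ | ∃ t : ℝ, z = p + (t : ℂ) * d})
    (ξ : ℂ) (hξ : ξ ∉ ℓ)
    (zs : ℂ) (hzs : zs ∈ ℓ) (hproj : (inner ℝ (ξ - zs) d : ℝ) = 0)
    (ξ' : ℂ) (hξ' : ξ' = 2 * zs - ξ)
    (x y : ℂ) (hy : y ∈ ℓ) (hyne : y ≠ ξ') (hseg : y ∈ segment ℝ ξ' x) :
    ((Complex.arg (y - ξ) : Real.Angle) + (Complex.arg (x - ξ') : Real.Angle)) =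
      ((2 * β : ℝ) : Real.Angle) :=
  reflection_angle_identity_general β p d hd ℓ hℓ ξ zs hzs hproj ξ' hξ' x y hy hyne hseg
end

section
/- Let ℓ ⊂ ℝ² be the line through a point p with unit direction vector d = (cos β, sin β), let n = (−sin β, cos β) be a unit normal to ℓ, let ξ ∈ ℝ² with ξ ∉ ℓ, let z* be the orthogonal projection of ξ onto ℓ, and let ξ' := 2z* − ξ be the mirror image of ξ across ℓ. Let ψ : ℝ → ℝ be differentiable. Then for every y ∈ ℓ with y ≠ ξ, the function s ↦ ψ(‖y + s·n − ξ‖) + ψ(‖y + s·n − ξ'‖) is differentiable at s = 0 with derivative equal to 0. -/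
open Real
open scoped RealInnerProductSpace

/-!
Reflection in `ℓ` fixes every `y ∈ ℓ`, swaps `ξ` and `ξ'` and reverses the normal `n`, so
`‖y + s • n - ξ'‖ = ‖y - s • n - ξ‖`. The field along the normal is therefore `s ↦ h s + h (-s)`
with `h s = ψ ‖y + s • n - ξ‖`, an even function, and its derivative at `0` is `h' 0 - h' 0 = 0`.
-/

theorem HasDerivAt.add_comp_neg_zero {𝕜 F : Type*} [NontriviallyNormedField 𝕜]
    [NormedAddCommGroup F] [NormedSpace 𝕜 F] {f : 𝕜 → F} {f' : F} (hf : HasDerivAt f f' 0) :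
    HasDerivAt (fun s => f s + f (-s)) 0 0 := by
  have hneg : HasDerivAt (fun s => f (-s)) (-f') 0 := by
    simpa [Function.comp_def] using
      hf.scomp_of_eq (0 : 𝕜) (hasDerivAt_neg' (x := (0 : 𝕜))) neg_zero.symm
  exact (hf.add hneg).congr_deriv (add_neg_cancel f')

section Mirror

variable {E : Type*} [NormedAddCommGroup E] [InnerProductSpace ℝ E]

theorem norm_add_smul_sub_mirror {y z ξ n : E} (hyξ : ⟪y - z, ξ - z⟫ = 0)
    (hyn : ⟪y - z, n⟫ = 0) (s : ℝ) :
    ‖y + s • n - ((2 : ℝ) • z - ξ)‖ = ‖y + (-s) • n - ξ‖ := by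
  have horth : ⟪y - z, s • n + (ξ - z)⟫ = 0 := by
    rw [inner_add_right, real_inner_smul_right, hyn, hyξ, mul_zero, add_zero]
  calc ‖y + s • n - ((2 : ℝ) • z - ξ)‖ = ‖(s • n + (ξ - z)) + (y - z)‖ := by congr 1; module
    _ = ‖(s • n + (ξ - z)) - (y - z)‖ := (norm_sub_eq_norm_add horth).symm
    _ = ‖-(y + (-s) • n - ξ)‖ := by congr 1; module
    _ = ‖y + (-s) • n - ξ‖ := norm_neg _

theorem differentiableAt_comp_norm_add_smul_sub {ψ : ℝ → ℝ} {y ξ : E} (n : E)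
    (hψ : DifferentiableAt ℝ ψ ‖y - ξ‖) (hyξ : y ≠ ξ) :
    DifferentiableAt ℝ (fun s : ℝ => ψ ‖y + s • n - ξ‖) 0 := by
  have hline : DifferentiableAt ℝ (fun s : ℝ => y + s • n - ξ) 0 := by fun_prop
  have hnorm : DifferentiableAt ℝ (fun s : ℝ => ‖y + s • n - ξ‖) 0 :=
    hline.norm ℝ (by simpa [sub_eq_zero] using hyξ)
  exact DifferentiableAt.comp (0 : ℝ) (by simpa using hψ) hnorm

end Mirror

theorem inner_cos_sin_neg_sin_cos {β : ℝ} {d n : EuclideanSpace ℝ (Fin 2)}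
    (hd0 : d 0 = cos β) (hd1 : d 1 = sin β) (hn0 : n 0 = -sin β) (hn1 : n 1 = cos β) :
    ⟪d, n⟫ = 0 := by
  simp only [PiLp.inner_apply, Fin.sum_univ_two, RCLike.inner_apply, conj_trivial,
    hd0, hd1, hn0, hn1]
  ring

theorem images_neumann_boundary_condition_general (β : ℝ) (p d n : EuclideanSpace ℝ (Fin 2))
    (hd0 : d 0 = Real.cos β) (hd1 : d 1 = Real.sin β)
    (hn0 : n 0 = -Real.sin β) (hn1 : n 1 = Real.cos β)
    (ℓ : Set (EuclideanSpace ℝ (Fin 2)))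
    (hℓ : ℓ = {z : EuclideanSpace ℝ (Fin 2) | ∃ t : ℝ, z = p + t • d})
    (ξ : EuclideanSpace ℝ (Fin 2))
    (zs : EuclideanSpace ℝ (Fin 2)) (hzs : zs ∈ ℓ) (hproj : (inner ℝ (ξ - zs) d : ℝ) = 0)
    (ξ' : EuclideanSpace ℝ (Fin 2)) (hξ' : ξ' = (2 : ℝ) • zs - ξ)
    (ψ : ℝ → ℝ) (hψ : Differentiable ℝ ψ) :
    ∀ y ∈ ℓ, y ≠ ξ →
      HasDerivAt (fun s : ℝ => ψ ‖y + s • n - ξ‖ + ψ ‖y + s • n - ξ'‖) 0 0 := by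
  intro y hy hyξ
  subst hℓ hξ'
  obtain ⟨t, rfl⟩ := hy
  obtain ⟨t₀, rfl⟩ := hzs
  have hyz : p + t • d - (p + t₀ • d) = (t - t₀) • d := by module
  have hyz_ξ : ⟪p + t • d - (p + t₀ • d), ξ - (p + t₀ • d)⟫ = 0 := by
    rw [hyz, real_inner_smul_left, real_inner_comm, hproj, mul_zero]
  have hyz_n : ⟪p + t • d - (p + t₀ • d), n⟫ = 0 := by
    rw [hyz, real_inner_smul_left, inner_cos_sin_neg_sin_cos hd0 hd1 hn0 hn1, mul_zero]
  simp_rw [norm_add_smul_sub_mirror hyz_ξ hyz_n]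
  exact (differentiableAt_comp_norm_add_smul_sub n (hψ _) hyξ).hasDerivAt.add_comp_neg_zero

/-- Neumann method of images: let `ℓ` be the line through `p` with unit direction
`d = (cos β, sin β)` and unit normal `n = (−sin β, cos β)`, let `ξ ∉ ℓ`, let `z*` be the
orthogonal projection of `ξ` onto `ℓ`, and let `ξ' = 2z* − ξ` be the mirror image of `ξ`.
For any differentiable radial profile `ψ : ℝ → ℝ` and any `y ∈ ℓ` with `y ≠ ξ`, the
normal derivative of `x ↦ ψ(‖x − ξ‖) + ψ(‖x − ξ'‖)` vanishes at `y`: the map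
`s ↦ ψ(‖y + s·n − ξ‖) + ψ(‖y + s·n − ξ'‖)` has derivative `0` at `s = 0`. -/
theorem images_neumann_boundary_condition (β : ℝ) (p d n : EuclideanSpace ℝ (Fin 2))
    (hd0 : d 0 = Real.cos β) (hd1 : d 1 = Real.sin β)
    (hn0 : n 0 = -Real.sin β) (hn1 : n 1 = Real.cos β)
    (ℓ : Set (EuclideanSpace ℝ (Fin 2)))
    (hℓ : ℓ = {z : EuclideanSpace ℝ (Fin 2) | ∃ t : ℝ, z = p + t • d})
    (ξ : EuclideanSpace ℝ (Fin 2)) (hξ : ξ ∉ ℓ)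
    (zs : EuclideanSpace ℝ (Fin 2)) (hzs : zs ∈ ℓ) (hproj : (inner ℝ (ξ - zs) d : ℝ) = 0)
    (ξ' : EuclideanSpace ℝ (Fin 2)) (hξ' : ξ' = (2 : ℝ) • zs - ξ)
    (ψ : ℝ → ℝ) (hψ : Differentiable ℝ ψ) :
    ∀ y ∈ ℓ, y ≠ ξ →
      HasDerivAt (fun s : ℝ => ψ ‖y + s • n - ξ‖ + ψ ‖y + s • n - ξ'‖) 0 0 :=
  images_neumann_boundary_condition_general β p d n hd0 hd1 hn0 hn1 ℓ hℓ ξ zs hzs hproj ξ' hξ' ψ hψ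
end

section
/- Define the UTD transition function F : (0,∞) → ℝ by F(x) = 2√x · √( (√(2π)/4 − ∫₀^{√x} cos(y²) dy)² + (√(2π)/4 − ∫₀^{√x} sin(y²) dy)² ), where the integrals are over the bounded interval [0,√x]. Then F(x) tends to 1 as x → ∞, i.e. lim_{x→∞} F(x) = 1. -/
/-!
Write `T(t) = √(2π)/4 · (1 + i) - ∫₀^t exp(i y²) dy`, the tail `∫_t^∞ exp(i y²) dy` of the Fresnel
integral, so that `F(x) = |2√x · T(√x)|`. Integrating by parts twice, with
`exp(i y²) = (exp(i y²))' / (2 i y)`, gives `2t · T(t) = i · exp(i t²) + O(t⁻²)`, hence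
`F(x) = 1 + O(1/x)`.

The value `√(2π)/4 · (1 + i)` of `∫₀^∞ exp(i y²) dy` comes from the Gaussian integral
`∫₀^∞ exp(c y²) dy = √(π / -c) / 2`, `re c < 0`, by letting `c → i`: after one integration by
parts on `[1, ∞)` the left side is given by absolutely convergent integrals, continuous in `c` on
`re c ≤ 0` by dominated convergence.
-/

open Real

/-- The Kouyoumjian–Pathak (UTD) transition function, expressed via Fresnel integrals:
`F(x) = 2√x · √( (√(2π)/4 − ∫₀^{√x} cos(y²) dy)² + (√(2π)/4 − ∫₀^{√x} sin(y²) dy)² )`. -/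
noncomputable def utdTransition (x : ℝ) : ℝ :=
  2 * Real.sqrt x *
    Real.sqrt ((Real.sqrt (2 * π) / 4 - ∫ y in (0 : ℝ)..Real.sqrt x, Real.cos (y ^ 2)) ^ 2 +
      (Real.sqrt (2 * π) / 4 - ∫ y in (0 : ℝ)..Real.sqrt x, Real.sin (y ^ 2)) ^ 2)

open Complex MeasureTheory Filter Set Topology

theorem continuousOn_cexp_mul_sq_div_pow (c : ℂ) (k : ℕ) :
    ContinuousOn (fun y : ℝ => cexp (c * (y : ℂ) ^ 2) / (y : ℂ) ^ k) (Ioi 0) := by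
  refine ContinuousOn.div (by fun_prop) (by fun_prop) fun y hy => ?_
  exact pow_ne_zero _ (ofReal_ne_zero.mpr (ne_of_gt hy))

section

variable {c : ℂ}

theorem norm_cexp_mul_sq_le_one (hc : c.re ≤ 0) (y : ℝ) : ‖cexp (c * (y : ℂ) ^ 2)‖ ≤ 1 := by
  rw [norm_exp, ← ofReal_pow, re_mul_ofReal, Real.exp_le_one_iff]
  exact mul_nonpos_of_nonpos_of_nonneg hc (sq_nonneg y)

theorem norm_cexp_mul_sq_div_pow_le (hc : c.re ≤ 0) (k : ℕ) {y : ℝ} (hy : 0 < y) :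
    ‖cexp (c * (y : ℂ) ^ 2) / (y : ℂ) ^ k‖ ≤ y ^ (-(k : ℝ)) := by
  rw [norm_div, norm_pow, norm_real, Real.norm_of_nonneg hy.le, Real.rpow_neg hy.le,
    Real.rpow_natCast, div_eq_mul_inv]
  exact mul_le_of_le_one_left (by positivity) (norm_cexp_mul_sq_le_one hc y)

theorem hasDerivAt_cexp_mul_sq_div_pow (hc : c ≠ 0) (k : ℕ) {y : ℝ} (hy : y ≠ 0) :
    HasDerivAt (fun y : ℝ => cexp (c * (y : ℂ) ^ 2) / (2 * c * (y : ℂ) ^ (k + 1)))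
      (cexp (c * (y : ℂ) ^ 2) / (y : ℂ) ^ k
        - (k + 1) / (2 * c) * (cexp (c * (y : ℂ) ^ 2) / (y : ℂ) ^ (k + 2))) y := by
  have hy' : (y : ℂ) ≠ 0 := ofReal_ne_zero.mpr hy
  have hnum : HasDerivAt (fun y : ℝ => cexp (c * (y : ℂ) ^ 2))
      (cexp (c * (y : ℂ) ^ 2) * (c * (2 * (y : ℂ)))) y := by
    simpa using (((hasDerivAt_id (y : ℂ)).pow 2).const_mul c).cexp.comp_ofReal
  have hden : HasDerivAt (fun y : ℝ => 2 * c * (y : ℂ) ^ (k + 1))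
      (2 * c * ((k + 1 : ℕ) * (y : ℂ) ^ k)) y := by
    simpa using (((hasDerivAt_id (y : ℂ)).pow (k + 1)).const_mul (2 * c)).comp_ofReal
  refine (hnum.div hden (by simp [hc, hy'])).congr_deriv ?_
  field_simp
  push_cast
  ring

theorem integrableOn_Ioi_cexp_mul_sq_div_pow (hc : c.re ≤ 0) (k : ℕ) {a : ℝ} (ha : 0 < a) :
    IntegrableOn (fun y : ℝ => cexp (c * (y : ℂ) ^ 2) / (y : ℂ) ^ (k + 2)) (Ioi a) := by
  have hlt : -((k + 2 : ℕ) : ℝ) < -1 := by push_cast; linarith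
  refine Integrable.mono' (integrableOn_Ioi_rpow_of_lt hlt ha)
    (((continuousOn_cexp_mul_sq_div_pow c (k + 2)).mono
      (Ioi_subset_Ioi ha.le)).aestronglyMeasurable measurableSet_Ioi) ?_
  filter_upwards [ae_restrict_mem measurableSet_Ioi] with y hy
  exact norm_cexp_mul_sq_div_pow_le hc (k + 2) (ha.trans hy)

theorem norm_integral_Ioi_cexp_mul_sq_div_pow_le (hc : c.re ≤ 0) (k : ℕ) {a : ℝ} (ha : 0 < a) :
    ‖∫ y in Ioi a, cexp (c * (y : ℂ) ^ 2) / (y : ℂ) ^ (k + 2)‖ ≤ ((k + 1) * a ^ (k + 1))⁻¹ := by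
  have hlt : -((k + 2 : ℕ) : ℝ) < -1 := by push_cast; linarith
  refine (norm_integral_le_of_norm_le (integrableOn_Ioi_rpow_of_lt hlt ha) ?_).trans_eq ?_
  · filter_upwards [ae_restrict_mem measurableSet_Ioi] with y hy
    exact norm_cexp_mul_sq_div_pow_le hc (k + 2) (ha.trans hy)
  · rw [integral_Ioi_rpow_of_lt hlt ha, show -((k + 2 : ℕ) : ℝ) + 1 = -((k + 1 : ℕ) : ℝ) by
      push_cast; ring, Real.rpow_neg ha.le, Real.rpow_natCast]
    push_cast
    field_simp

theorem integral_cexp_mul_sq_div_pow_eq (hc : c ≠ 0) (k : ℕ) {a b : ℝ} (ha : 0 < a)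
    (hab : a ≤ b) :
    ∫ y in a..b, cexp (c * (y : ℂ) ^ 2) / (y : ℂ) ^ k =
      cexp (c * (b : ℂ) ^ 2) / (2 * c * (b : ℂ) ^ (k + 1))
        - cexp (c * (a : ℂ) ^ 2) / (2 * c * (a : ℂ) ^ (k + 1))
        + (k + 1) / (2 * c) * ∫ y in a..b, cexp (c * (y : ℂ) ^ 2) / (y : ℂ) ^ (k + 2) := by
  have hsub : uIcc a b ⊆ Ioi 0 := by
    rw [uIcc_of_le hab]; exact fun y hy => ha.trans_le hy.1
  have hint : ∀ n : ℕ, IntervalIntegrable (fun y : ℝ => cexp (c * (y : ℂ) ^ 2) / (y : ℂ) ^ n)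
      volume a b := fun n => ((continuousOn_cexp_mul_sq_div_pow c n).mono hsub).intervalIntegrable
  have hftc := intervalIntegral.integral_eq_sub_of_hasDerivAt
    (fun y hy => hasDerivAt_cexp_mul_sq_div_pow hc k (hsub hy).ne')
    ((hint k).sub ((hint (k + 2)).const_mul _))
  rw [intervalIntegral.integral_sub (hint k) ((hint (k + 2)).const_mul _),
    intervalIntegral.integral_const_mul] at hftc
  linear_combination hftc

theorem tendsto_integral_cexp_mul_sq_div_pow (hc : c ≠ 0) (hre : c.re ≤ 0) (k : ℕ) {a : ℝ}
    (ha : 0 < a) :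
    Tendsto (fun b => ∫ y in a..b, cexp (c * (y : ℂ) ^ 2) / (y : ℂ) ^ k) atTop
      (𝓝 (-(cexp (c * (a : ℂ) ^ 2) / (2 * c * (a : ℂ) ^ (k + 1)))
        + (k + 1) / (2 * c) * ∫ y in Ioi a, cexp (c * (y : ℂ) ^ 2) / (y : ℂ) ^ (k + 2))) := by
  have hboundary : Tendsto (fun b : ℝ => cexp (c * (b : ℂ) ^ 2) / (2 * c * (b : ℂ) ^ (k + 1)))
      atTop (𝓝 0) := by
    refine squeeze_zero_norm' (a := fun b : ℝ => ‖(2 * c)⁻¹‖ * b ^ (-((k + 1 : ℕ) : ℝ))) ?_ ?_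
    · filter_upwards [eventually_gt_atTop 0] with b hb
      rw [mul_comm (2 * c), div_mul_eq_div_div, div_eq_mul_inv _ (2 * c), norm_mul, mul_comm]
      gcongr
      exact norm_cexp_mul_sq_div_pow_le hre (k + 1) hb
    · rw [← mul_zero ‖(2 * c)⁻¹‖]
      exact (tendsto_rpow_neg_atTop (by positivity)).const_mul _
  have htail := intervalIntegral_tendsto_integral_Ioi a
    (integrableOn_Ioi_cexp_mul_sq_div_pow hre k ha) tendsto_id
  have hlim := (hboundary.sub_const (cexp (c * (a : ℂ) ^ 2) / (2 * c * (a : ℂ) ^ (k + 1)))).add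
    (htail.const_mul ((k + 1) / (2 * c)))
  rw [zero_sub] at hlim
  refine hlim.congr' ?_
  filter_upwards [eventually_ge_atTop a] with b hb
  exact (integral_cexp_mul_sq_div_pow_eq hc k ha hb).symm

theorem norm_integral_Ioi_cexp_mul_sq_div_sq_le (hc : c ≠ 0) (hre : c.re ≤ 0) {a : ℝ}
    (ha : 0 < a) :
    ‖∫ y in Ioi a, cexp (c * (y : ℂ) ^ 2) / (y : ℂ) ^ 2‖ ≤ (‖c‖ * a ^ 3)⁻¹ := by
  have hparts := tendsto_nhds_unique (intervalIntegral_tendsto_integral_Ioi a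
    (integrableOn_Ioi_cexp_mul_sq_div_pow hre 0 ha) tendsto_id)
    (tendsto_integral_cexp_mul_sq_div_pow hc hre 2 ha)
  have hboundary : ‖cexp (c * (a : ℂ) ^ 2) / (a : ℂ) ^ 3‖ ≤ (a ^ 3)⁻¹ := by
    simpa [Real.rpow_neg ha.le] using norm_cexp_mul_sq_div_pow_le hre 3 ha
  have hrest := norm_integral_Ioi_cexp_mul_sq_div_pow_le hre 2 ha
  set R := ∫ y in Ioi a, cexp (c * (y : ℂ) ^ 2) / (y : ℂ) ^ (2 + 2)
  have hexpr :
      -(cexp (c * (a : ℂ) ^ 2) / (2 * c * (a : ℂ) ^ (2 + 1))) + ((2 : ℕ) + 1) / (2 * c) * R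
        = (2 * c)⁻¹ * (-(cexp (c * (a : ℂ) ^ 2) / (a : ℂ) ^ 3) + 3 * R) := by
    push_cast; field_simp; ring
  have hR : ‖R‖ ≤ (3 * a ^ 3)⁻¹ := by norm_num at hrest ⊢; exact hrest
  rw [hparts, hexpr, norm_mul, norm_inv, norm_mul, RCLike.norm_ofNat]
  calc (2 * ‖c‖)⁻¹ * ‖-(cexp (c * (a : ℂ) ^ 2) / (a : ℂ) ^ 3) + 3 * R‖
      ≤ (2 * ‖c‖)⁻¹ * ((a ^ 3)⁻¹ + 3 * (3 * a ^ 3)⁻¹) := by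
        gcongr
        refine (norm_add_le _ _).trans (add_le_add (by rwa [norm_neg]) ?_)
        rw [norm_mul, RCLike.norm_ofNat]
        gcongr
    _ = (‖c‖ * a ^ 3)⁻¹ := by field_simp; ring

end

/-- `∫₀^∞ exp (c y²) dy`, with the tail over `[1, ∞)` integrated by parts once so that it
converges absolutely for every `c ≠ 0` with `c.re ≤ 0`. -/
noncomputable def regGaussIntegral (c : ℂ) : ℂ :=
  (∫ y in (0 : ℝ)..1, cexp (c * (y : ℂ) ^ 2))
    + (-(cexp c / (2 * c))
      + 1 / (2 * c) * ∫ y in Ioi (1 : ℝ), cexp (c * (y : ℂ) ^ 2) / (y : ℂ) ^ 2)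

section

variable {c : ℂ}

theorem tendsto_integral_cexp_mul_sq (hc : c ≠ 0) (hre : c.re ≤ 0) :
    Tendsto (fun b => ∫ y in (0 : ℝ)..b, cexp (c * (y : ℂ) ^ 2)) atTop
      (𝓝 (regGaussIntegral c)) := by
  have htail := tendsto_integral_cexp_mul_sq_div_pow hc hre 0 one_pos
  simp only [pow_zero, div_one, zero_add, Nat.cast_zero, ofReal_one, one_pow, mul_one] at htail
  refine (htail.const_add (∫ y in (0 : ℝ)..1, cexp (c * (y : ℂ) ^ 2))).congr fun b => ?_
  exact intervalIntegral.integral_add_adjacent_intervals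
    (Continuous.intervalIntegrable (by fun_prop) _ _)
    (Continuous.intervalIntegrable (by fun_prop) _ _)

theorem regGaussIntegral_eq_of_re_neg (hre : c.re < 0) :
    regGaussIntegral c = (π / -c) ^ (1 / 2 : ℂ) / 2 := by
  have hb : 0 < (-c).re := by simpa using hre
  refine tendsto_nhds_unique (tendsto_integral_cexp_mul_sq (by rintro rfl; simp at hre) hre.le) ?_
  rw [← integral_gaussian_complex_Ioi hb]
  simp only [neg_neg]
  exact intervalIntegral_tendsto_integral_Ioi 0
    (by simpa using (integrable_cexp_neg_mul_sq hb).integrableOn) tendsto_id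

theorem continuousWithinAt_regGaussIntegral (hc : c ≠ 0) :
    ContinuousWithinAt regGaussIntegral {z | z.re ≤ 0} c := by
  have hhead : Continuous fun z : ℂ => ∫ y in (0 : ℝ)..1, cexp (z * (y : ℂ) ^ 2) :=
    intervalIntegral.continuous_parametric_intervalIntegral_of_continuous' (by fun_prop) 0 1
  have hboundary : ContinuousAt (fun z : ℂ => cexp z / (2 * z)) c :=
    by fun_prop (disch := simpa using hc)
  have hfactor : ContinuousAt (fun z : ℂ => 1 / (2 * z)) c :=
    by fun_prop (disch := simpa using hc)
  have htail : ContinuousWithinAt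
      (fun z : ℂ => ∫ y in Ioi (1 : ℝ), cexp (z * (y : ℂ) ^ 2) / (y : ℂ) ^ 2) {z | z.re ≤ 0} c := by
    refine continuousWithinAt_of_dominated (bound := fun y : ℝ => y ^ (-((0 + 2 : ℕ) : ℝ)))
      (Eventually.of_forall fun z => ((continuousOn_cexp_mul_sq_div_pow z 2).mono
        (Ioi_subset_Ioi zero_le_one)).aestronglyMeasurable measurableSet_Ioi) ?_
      (integrableOn_Ioi_rpow_of_lt (by norm_num) one_pos) (ae_of_all _ fun y => by fun_prop)
    filter_upwards [self_mem_nhdsWithin] with z (hz : z.re ≤ 0)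
    filter_upwards [ae_restrict_mem measurableSet_Ioi] with y hy
    exact norm_cexp_mul_sq_div_pow_le hz (0 + 2) (one_pos.trans hy)
  exact hhead.continuousWithinAt.add
    (hboundary.continuousWithinAt.neg.add (hfactor.continuousWithinAt.mul htail))

end

theorem regGaussIntegral_I : regGaussIntegral I = √(2 * π) / 4 * (1 + I) := by
  set w : ℂ := (√(2 * π) / 2 : ℝ) * (1 + I)
  have hw : π / -I = w ^ 2 := by
    have hs : ((√(2 * π) / 2 : ℝ) : ℂ) ^ 2 = π / 2 := by
      rw [← ofReal_pow, div_pow, Real.sq_sqrt (by positivity)]; push_cast; ring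
    rw [mul_pow, hs, div_neg, div_I]
    ring_nf; rw [I_sq]; ring
  -- approach `I` along `I - ε`, inside the half-plane where the Gaussian integral is known
  have hpath : Tendsto (fun ε : ℝ => I - ε) (𝓝[>] 0) (𝓝[{z | z.re < 0}] I) := by
    refine tendsto_nhdsWithin_iff.mpr ⟨?_, ?_⟩
    · simpa using ((continuous_const.sub continuous_ofReal).tendsto (0 : ℝ)).mono_left
        nhdsWithin_le_nhds (f := fun ε : ℝ => I - ε)
    · filter_upwards [self_mem_nhdsWithin] with ε (hε : 0 < ε)
      simpa using hε
  have hlhs := ((continuousWithinAt_regGaussIntegral I_ne_zero).tendsto.mono_left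
    (nhdsWithin_mono _ fun z (hz : z.re < 0) => hz.le)).comp hpath
  have hrhs : ContinuousAt (fun z : ℂ => (π / -z) ^ (1 / 2 : ℂ) / 2) I := by
    have hslit : π / -I ∈ slitPlane := by
      rw [div_neg, div_I, neg_neg, mem_slitPlane_iff]; right; simp [Real.pi_ne_zero]
    exact (ContinuousAt.comp (f := fun z : ℂ => (π : ℂ) / -z) (continuousAt_cpow_const hslit)
      (by fun_prop (disch := simp))).div_const 2
  have heq : regGaussIntegral I = (π / -I) ^ (1 / 2 : ℂ) / 2 := by
    refine tendsto_nhds_unique hlhs ?_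
    refine ((hrhs.tendsto.comp (tendsto_nhdsWithin_iff.mp hpath).1)).congr' ?_
    filter_upwards [self_mem_nhdsWithin] with ε (hε : 0 < ε)
    exact (regGaussIntegral_eq_of_re_neg (by simpa using hε)).symm
  have hwre : 0 < w.re := by simp [w]; positivity
  rw [heq, hw, one_div, sq_cpow_two_inv hwre]
  simp only [w]; push_cast; ring

theorem tendsto_integral_cexp_I_mul_sq :
    Tendsto (fun b => ∫ y in (0 : ℝ)..b, cexp (I * (y : ℂ) ^ 2)) atTop
      (𝓝 (√(2 * π) / 4 * (1 + I))) :=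
  regGaussIntegral_I ▸ tendsto_integral_cexp_mul_sq I_ne_zero (by simp)

noncomputable def fresnelTail (t : ℝ) : ℂ :=
  √(2 * π) / 4 * (1 + I) - ∫ y in (0 : ℝ)..t, cexp (I * (y : ℂ) ^ 2)

theorem fresnelTail_eq {t : ℝ} (ht : 0 < t) :
    fresnelTail t = -(cexp (I * (t : ℂ) ^ 2) / (2 * I * t))
      + 1 / (2 * I) * ∫ y in Ioi t, cexp (I * (y : ℂ) ^ 2) / (y : ℂ) ^ 2 := by
  have htail : Tendsto (fun b => ∫ y in t..b, cexp (I * (y : ℂ) ^ 2)) atTop (𝓝 (fresnelTail t)) :=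
    (tendsto_integral_cexp_I_mul_sq.sub_const _).congr fun b =>
      intervalIntegral.integral_interval_sub_left
        (Continuous.intervalIntegrable (by fun_prop) _ _)
        (Continuous.intervalIntegrable (by fun_prop) _ _)
  have hparts := tendsto_integral_cexp_mul_sq_div_pow I_ne_zero (by simp) 0 ht
  simp only [pow_zero, div_one, zero_add, Nat.cast_zero, pow_one] at hparts
  exact tendsto_nhds_unique htail hparts

theorem norm_two_mul_fresnelTail_sub_le {t : ℝ} (ht : 0 < t) :
    ‖2 * t * fresnelTail t - I * cexp (I * (t : ℂ) ^ 2)‖ ≤ (t ^ 2)⁻¹ := by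
  have ht' : (t : ℂ) ≠ 0 := ofReal_ne_zero.mpr ht.ne'
  have hJ := norm_integral_Ioi_cexp_mul_sq_div_sq_le I_ne_zero (by simp) ht
  set J := ∫ y in Ioi t, cexp (I * (y : ℂ) ^ 2) / (y : ℂ) ^ 2
  have hcancel :
      ∀ E : ℂ, 2 * t * (-(E / (2 * I * t)) + 1 / (2 * I) * J) - I * E = -(I * t) * J := by
    intro E
    field_simp
    ring_nf
    simp [I_sq]
  calc ‖2 * t * fresnelTail t - I * cexp (I * (t : ℂ) ^ 2)‖ = ‖-(I * t) * J‖ := by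
        rw [fresnelTail_eq ht, hcancel]
    _ ≤ t * (t ^ 3)⁻¹ := by simpa [abs_of_pos ht] using mul_le_mul_of_nonneg_left hJ ht.le
    _ = (t ^ 2)⁻¹ := by field_simp

theorem integral_cexp_I_mul_sq (t : ℝ) :
    ∫ y in (0 : ℝ)..t, cexp (I * (y : ℂ) ^ 2) =
      (∫ y in (0 : ℝ)..t, Real.cos (y ^ 2) : ℝ)
        + (∫ y in (0 : ℝ)..t, Real.sin (y ^ 2) : ℝ) * I := by
  have hexp : ∀ y : ℝ, cexp (I * (y : ℂ) ^ 2) = Real.cos (y ^ 2) + Real.sin (y ^ 2) * I := by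
    intro y
    rw [mul_comm, ← ofReal_pow, exp_mul_I, ← ofReal_cos, ← ofReal_sin]
  simp only [hexp]
  rw [intervalIntegral.integral_add (Continuous.intervalIntegrable (by fun_prop) _ _)
      (Continuous.intervalIntegrable (by fun_prop) _ _), intervalIntegral.integral_mul_const,
    intervalIntegral.integral_ofReal, intervalIntegral.integral_ofReal]

theorem utdTransition_eq_norm_fresnelTail (x : ℝ) :
    utdTransition x = ‖2 * (√x : ℂ) * fresnelTail √x‖ := by
  have hsplit : fresnelTail √x
      = ((√(2 * π) / 4 - ∫ y in (0 : ℝ)..√x, Real.cos (y ^ 2) : ℝ) : ℂ)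
        + ((√(2 * π) / 4 - ∫ y in (0 : ℝ)..√x, Real.sin (y ^ 2) : ℝ) : ℂ) * I := by
    rw [fresnelTail, integral_cexp_I_mul_sq]; push_cast; ring
  rw [hsplit, norm_mul, norm_mul, norm_add_mul_I, norm_real,
    Real.norm_of_nonneg (Real.sqrt_nonneg x), RCLike.norm_ofNat, utdTransition]

/-- The UTD transition function tends to `1` as its argument tends to `∞`. -/
theorem utdTransition_tendsto_one :
    Filter.Tendsto utdTransition Filter.atTop (nhds 1) := by
  have hclose : ∀ x : ℝ, 0 < x → |utdTransition x - 1| ≤ x⁻¹ := by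
    intro x hx
    have hunit : ‖I * cexp (I * ((√x : ℝ) : ℂ) ^ 2)‖ = 1 := by
      rw [norm_mul, norm_I, one_mul, ← ofReal_pow, norm_exp_I_mul_ofReal]
    calc |utdTransition x - 1|
        ≤ ‖2 * (√x : ℂ) * fresnelTail √x - I * cexp (I * ((√x : ℝ) : ℂ) ^ 2)‖ := by
          rw [utdTransition_eq_norm_fresnelTail, ← hunit]
          exact abs_norm_sub_norm_le _ _
      _ ≤ ((√x) ^ 2)⁻¹ := norm_two_mul_fresnelTail_sub_le (Real.sqrt_pos.mpr hx)
      _ = x⁻¹ := by rw [Real.sq_sqrt hx.le]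
  rw [tendsto_iff_norm_sub_tendsto_zero]
  refine squeeze_zero' (Eventually.of_forall fun x => norm_nonneg _) ?_ tendsto_inv_atTop_zero
  filter_upwards [eventually_gt_atTop 0] with x hx
  exact hclose x hx
end

section
/- Let a > 0 and ν > 0, and let F : (0,∞) → ℝ be the UTD transition function F(x) = 2√x · √( (√(2π)/4 − ∫₀^{√x} cos(y²) dy)² + (√(2π)/4 − ∫₀^{√x} sin(y²) dy)² ). Then, as δ → 0 from the right, −(ν/(2√(πa))) · cot(νδ/2) · F(a·sin²(δ/2)) tends to −1/2, i.e. lim_{δ→0⁺} −(ν/(2√(πa))) cot(νδ/2) F(a sin²(δ/2)) = −1/2. -/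
open Real

/-
As `δ → 0⁺`, with `s = sin(δ/2)`, the argument of `F` is `(√a s)²`, so
`F(a s²) = 2√a s · A(√a s)` where `A` is the continuous Fresnel amplitude, with `A(0) = √π/2`.
Writing `cot u = (cos u / sinc u) / u`, the expression becomes
`−(1/√π) · cos(νδ/2)/sinc(νδ/2) · sinc(δ/2) · A(√a sin(δ/2))`,
which is continuous at `δ = 0` with value `−(1/√π) · √π/2 = −1/2`.
-/

lemma Real.mul_cot_eq_cos_div_sinc {u : ℝ} (hu : u ≠ 0) : u * cot u = cos u / sinc u := by
  rw [cot_eq_cos_div_sin, sinc_of_ne_zero hu]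
  field_simp

noncomputable def fresnelAmplitude (t : ℝ) : ℝ :=
  √((√(2 * π) / 4 - ∫ y in (0 : ℝ)..t, cos (y ^ 2)) ^ 2 +
    (√(2 * π) / 4 - ∫ y in (0 : ℝ)..t, sin (y ^ 2)) ^ 2)

lemma continuous_fresnelAmplitude : Continuous fresnelAmplitude := by
  have primitive {f : ℝ → ℝ} (hf : Continuous f) : Continuous fun t => ∫ y in (0 : ℝ)..t, f y :=
    intervalIntegral.continuous_primitive (fun _ _ => hf.intervalIntegrable _ _) 0
  unfold fresnelAmplitude
  have := primitive (f := fun y => cos (y ^ 2)) (by fun_prop)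
  have := primitive (f := fun y => sin (y ^ 2)) (by fun_prop)
  fun_prop

lemma fresnelAmplitude_zero : fresnelAmplitude 0 = √π / 2 := by
  have hsq : (√(2 * π) / 4) ^ 2 + (√(2 * π) / 4) ^ 2 = (√π / 2) ^ 2 := by
    rw [div_pow, div_pow, sq_sqrt (by positivity), sq_sqrt pi_pos.le]
    ring
  simp only [fresnelAmplitude, intervalIntegral.integral_same, sub_zero, hsq]
  exact sqrt_sq (by positivity)

lemma utdTransition_sq {t : ℝ} (ht : 0 ≤ t) :
    utdTransition (t ^ 2) = 2 * t * fresnelAmplitude t := by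
  rw [utdTransition, sqrt_sq ht, fresnelAmplitude]

/-- One-sided limit of a single cotangent term of the UTD diffraction coefficient at a
shadow boundary: for `a > 0`, `ν > 0`,
`−(ν/(2√(πa))) · cot(νδ/2) · F(a sin²(δ/2)) → −1/2` as `δ → 0⁺`. -/
theorem utd_shadow_boundary_limit (a ν : ℝ) (ha : 0 < a) (hν : 0 < ν) :
    Filter.Tendsto
      (fun δ : ℝ => -(ν / (2 * Real.sqrt (π * a))) * Real.cot (ν * δ / 2) *
        utdTransition (a * Real.sin (δ / 2) ^ 2))
      (nhdsWithin 0 (Set.Ioi 0)) (nhds (-1 / 2)) := by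
  set g : ℝ → ℝ := fun δ => -(1 / √π) * (cos (ν * δ / 2) / sinc (ν * δ / 2)) * sinc (δ / 2) *
    fresnelAmplitude (√a * sin (δ / 2))
  have hg : ContinuousAt g 0 := by
    have := continuous_fresnelAmplitude
    have := continuous_sinc
    fun_prop (disch := simp)
  have hg0 : g 0 = -1 / 2 := by
    simp only [g, mul_zero, zero_div, cos_zero, sinc_zero, sin_zero, fresnelAmplitude_zero]
    field_simp
  refine (hg0 ▸ hg.tendsto.mono_left nhdsWithin_le_nhds).congr' ?_
  filter_upwards [Ioo_mem_nhdsGT pi_pos] with δ ⟨hδ0, hδπ⟩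
  have hs : 0 ≤ sin (δ / 2) := sin_nonneg_of_nonneg_of_le_pi (by linarith) (by linarith)
  have hu : ν * δ / 2 ≠ 0 := by positivity
  dsimp only [g]
  rw [← mul_cot_eq_cos_div_sinc hu, sinc_of_ne_zero (by positivity), ← sq_sqrt ha.le, ← mul_pow,
    utdTransition_sq (by positivity), sqrt_mul pi_pos.le, sq_sqrt ha.le]
  field_simp
end

section
/- Let F : (0,∞) → ℝ be the UTD transition function F(x) = 2√x · √( (√(2π)/4 − ∫₀^{√x} cos(y²) dy)² + (√(2π)/4 − ∫₀^{√x} sin(y²) dy)² ). Fix the wedge with exterior angle α = 3π/2, so that the wedge index is ν = π/(2π−α) = 2 and 2π−α = π/2, and take the integer parameters N₁ = 1, N₂ = −1, N₃ = 2, N₄ = 0. For k, s > 0 and angles φ, θ, define φ̂₁ = (π+φ−θ)ν/2, φ̂₂ = (π−φ+θ)ν/2, φ̂₃ = (π+φ+θ)ν/2, φ̂₄ = (π−φ−θ)ν/2, and φ̃₁ = N₁(2π−α) − (φ−θ)/2, φ̃₂ = N₂(2π−α) − (φ−θ)/2, φ̃₃ = N₃(2π−α) − (φ+θ)/2, φ̃₄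 = N₄(2π−α) − (φ+θ)/2, and set D_j = −(ν/(2√(2πks))) · cot(φ̂_j) · F(2ks·cos²(φ̃_j)) for j = 1,2,3,4. Then, whenever sin(φ̂_j) ≠ 0 and cos(φ̃_j) ≠ 0 for all j, the Neumann UTD diffraction coefficient vanishes identically: D₁ + D₂ + D₃ + D₄ = 0. -/
open Real

/-- For the wedge with exterior angle `α = 3π/2` (wedge index `ν = π/(2π−α) = 2`,
`2π − α = π/2`) and rounding parameters `N₁ = 1`, `N₂ = −1`, `N₃ = 2`, `N₄ = 0`,
the Neumann UTD diffraction coefficient `D₁ + D₂ + D₃ + D₄` vanishes identically,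
whenever all the cotangent and transition-function arguments are nondegenerate. -/
theorem utd_coefficient_vanishes_integer_index (k s φ θ α ν : ℝ) (N₁ N₂ N₃ N₄ : ℤ)
    (hk : 0 < k) (hs : 0 < s)
    (hα : α = 3 * π / 2) (hν : ν = π / (2 * π - α))
    (hN₁ : N₁ = 1) (hN₂ : N₂ = -1) (hN₃ : N₃ = 2) (hN₄ : N₄ = 0)
    (φh₁ φh₂ φh₃ φh₄ φt₁ φt₂ φt₃ φt₄ D₁ D₂ D₃ D₄ : ℝ)
    (hφh₁ : φh₁ = (π + φ - θ) / 2 * ν) (hφh₂ : φh₂ = (π - φ + θ) / 2 * ν)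
    (hφh₃ : φh₃ = (π + φ + θ) / 2 * ν) (hφh₄ : φh₄ = (π - φ - θ) / 2 * ν)
    (hφt₁ : φt₁ = (N₁ : ℝ) * (2 * π - α) - (φ - θ) / 2)
    (hφt₂ : φt₂ = (N₂ : ℝ) * (2 * π - α) - (φ - θ) / 2)
    (hφt₃ : φt₃ = (N₃ : ℝ) * (2 * π - α) - (φ + θ) / 2)
    (hφt₄ : φt₄ = (N₄ : ℝ) * (2 * π - α) - (φ + θ) / 2)
    (hD₁ : D₁ = -(ν / (2 * Real.sqrt (2 * π * k * s))) * Real.cot φh₁ *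
      utdTransition (2 * k * s * Real.cos φt₁ ^ 2))
    (hD₂ : D₂ = -(ν / (2 * Real.sqrt (2 * π * k * s))) * Real.cot φh₂ *
      utdTransition (2 * k * s * Real.cos φt₂ ^ 2))
    (hD₃ : D₃ = -(ν / (2 * Real.sqrt (2 * π * k * s))) * Real.cot φh₃ *
      utdTransition (2 * k * s * Real.cos φt₃ ^ 2))
    (hD₄ : D₄ = -(ν / (2 * Real.sqrt (2 * π * k * s))) * Real.cot φh₄ *
      utdTransition (2 * k * s * Real.cos φt₄ ^ 2))
    (hsin₁ : Real.sin φh₁ ≠ 0) (hsin₂ : Real.sin φh₂ ≠ 0)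
    (hsin₃ : Real.sin φh₃ ≠ 0) (hsin₄ : Real.sin φh₄ ≠ 0)
    (hcos₁ : Real.cos φt₁ ≠ 0) (hcos₂ : Real.cos φt₂ ≠ 0)
    (hcos₃ : Real.cos φt₃ ≠ 0) (hcos₄ : Real.cos φt₄ ≠ 0) :
    D₁ + D₂ + D₃ + D₄ = 0 := by
  have hπ := Real.pi_pos
  have hν2 : ν = 2 := by
    rw [hν, hα]
    have h : 2 * π - 3 * π / 2 = π / 2 := by ring
    rw [h, div_div_eq_mul_div, mul_comm]
    field_simp
  -- simplify angles
  have hφh₁' : φh₁ = π + (φ - θ) := by rw [hφh₁, hν2]; ring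
  have hφh₂' : φh₂ = π - (φ - θ) := by rw [hφh₂, hν2]; ring
  have hφh₃' : φh₃ = π + (φ + θ) := by rw [hφh₃, hν2]; ring
  have hφh₄' : φh₄ = π - (φ + θ) := by rw [hφh₄, hν2]; ring
  have hφt₁' : φt₁ = π / 2 - (φ - θ) / 2 := by rw [hφt₁, hN₁, hα]; push_cast; ring
  have hφt₂' : φt₂ = -(π / 2) - (φ - θ) / 2 := by rw [hφt₂, hN₂, hα]; push_cast; ring
  have hφt₃' : φt₃ = π - (φ + θ) / 2 := by rw [hφt₃, hN₃, hα]; push_cast; ring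
  have hφt₄' : φt₄ = -((φ + θ) / 2) := by rw [hφt₄, hN₄, hα]; push_cast; ring
  have key : ∀ x : ℝ, Real.cot (π + x) = - Real.cot (π - x) := by
    intro x
    rw [Real.cot_eq_cos_div_sin, Real.cot_eq_cos_div_sin, Real.cos_pi_sub, Real.sin_pi_sub,
      show π + x = π - (-x) by ring, Real.cos_pi_sub, Real.sin_pi_sub, Real.cos_neg,
      Real.sin_neg]
    ring
  have hcots₁ : Real.cot φh₁ = - Real.cot φh₂ := by rw [hφh₁', hφh₂']; exact key _
  have hcots₂ : Real.cot φh₃ = - Real.cot φh₄ := by rw [hφh₃', hφh₄']; exact key _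
  have hcos₁₂ : Real.cos φt₁ ^ 2 = Real.cos φt₂ ^ 2 := by
    rw [hφt₁', hφt₂']
    simp [Real.cos_sub, Real.sin_sub, Real.cos_add, Real.sin_add]
  have hcos₃₄ : Real.cos φt₃ ^ 2 = Real.cos φt₄ ^ 2 := by
    rw [hφt₃', hφt₄']
    simp [Real.cos_sub]
  rw [hD₁, hD₂, hD₃, hD₄, hcots₁, hcots₂, hcos₁₂, hcos₃₄]
  ring
end
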